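/- arXiv:1405.5344 — 4 statements merged into one kernel-verified Lean document; each statement's English description precedes it below -/
import Mathlib

section
/- For every positive integer N, the number of pairs (a,b) ∈ ℤ × ℤ with a² + b² = N equals 4·(e₁(N) − e₃(N)), where e₁(N) is the number of positive divisors of N congruent to 1 modulo 4 and e₃(N) is the number of positive divisors of N congruent to 3 modulo 4. -/
open Zsqrtd Finset

local notation "ℤ[i]" => GaussianInt

namespace Jacobi2Sq



def chi4 (n : ℕ) : ℤ := if n % 4 = 1 then 1 else if n % 4 = 3 then -1 else 0

lemma chi4_one : chi4 1 = 1 := by norm_num [chi4]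

lemma chi4_mul (m n : ℕ) : chi4 (m * n) = chi4 m * chi4 n := by
  have hm : m % 4 = 0 ∨ m % 4 = 1 ∨ m % 4 = 2 ∨ m % 4 = 3 := by omega
  have hn : n % 4 = 0 ∨ n % 4 = 1 ∨ n % 4 = 2 ∨ n % 4 = 3 := by omega
  have h : (m * n) % 4 = (m % 4) * (n % 4) % 4 := Nat.mul_mod m n 4
  rcases hm with hm|hm|hm|hm <;> rcases hn with hn|hn|hn|hn <;>
    simp [chi4, h, hm, hn]

lemma chi4_pow (p k : ℕ) : chi4 (p ^ k) = chi4 p ^ k := by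
  induction k with
  | zero => simpa using chi4_one
  | succ k ih => rw [pow_succ, chi4_mul, ih, pow_succ]

def chiAF : ArithmeticFunction ℤ := ⟨chi4, by norm_num [chi4]⟩

lemma chiAF_isMult : chiAF.IsMultiplicative :=
  ⟨chi4_one, fun {m n} _ => chi4_mul m n⟩

noncomputable def G (n : ℕ) : ℤ := ∑ d ∈ n.divisors, chi4 d

lemma G_eq (n : ℕ) : G n = (chiAF * (ArithmeticFunction.zeta : ArithmeticFunction ℕ)) n := by
  rw [ArithmeticFunction.coe_mul_zeta_apply]; rfl

lemma G_mul {m n : ℕ} (h : m.Coprime n) : G (m * n) = G m * G n := by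
  rw [G_eq, G_eq, G_eq]
  exact (chiAF_isMult.mul ArithmeticFunction.isMultiplicative_zeta.natCast).map_mul_of_coprime h

lemma G_one : G 1 = 1 := by simp [G, chi4_one]

lemma G_prime_pow {p : ℕ} (hp : p.Prime) (k : ℕ) :
    G (p ^ k) = ∑ i ∈ range (k + 1), chi4 p ^ i := by
  rw [G, Nat.sum_divisors_prime_pow hp]
  exact Finset.sum_congr rfl fun i _ => chi4_pow p i

lemma G_prime_pow_one {p : ℕ} (hp : p.Prime) (hp1 : p % 4 = 1) (k : ℕ) :
    G (p ^ k) = k + 1 := by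
  rw [G_prime_pow hp]
  simp [chi4, hp1]

lemma G_prime_pow_three {p : ℕ} (hp : p.Prime) (hp3 : p % 4 = 3) (k : ℕ) :
    G (p ^ k) = if Even k then 1 else 0 := by
  rw [G_prime_pow hp]
  have : chi4 p = -1 := by simp [chi4, hp3]
  rw [this, neg_one_geom_sum]
  rcases Nat.even_or_odd k with h | h
  · simp [h, Nat.even_add_one, Nat.not_even_iff_odd]
  · rw [if_pos h.add_one, if_neg (Nat.not_even_iff_odd.2 h)]

lemma G_two_mul {m : ℕ} (hm : 0 < m) : G (2 * m) = G m := by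
  have key : ∀ n : ℕ, 0 < n → G n = ∑ d ∈ n.divisors.filter (fun d => d % 2 = 1), chi4 d := by
    intro n hn
    rw [G, ← Finset.sum_filter_add_sum_filter_not n.divisors (fun d => d % 2 = 1)]
    have : ∑ d ∈ n.divisors.filter (fun d => ¬ d % 2 = 1), chi4 d = 0 := by
      apply Finset.sum_eq_zero
      intro d hd
      simp only [Finset.mem_filter] at hd
      have : d % 4 ≠ 1 ∧ d % 4 ≠ 3 := by omega
      simp [chi4, this.1, this.2]
    rw [this, add_zero]
  rw [key _ (by positivity), key _ hm]
  congr 1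
  ext d
  simp only [Finset.mem_filter, Nat.mem_divisors]
  constructor
  · rintro ⟨⟨hd, -⟩, hodd⟩
    refine ⟨⟨?_, hm.ne'⟩, hodd⟩
    have hcop : d.Coprime 2 := by
      have : d.gcd 2 ∣ 2 := Nat.gcd_dvd_right d 2
      have h2 : d.gcd 2 ∣ d := Nat.gcd_dvd_left d 2
      rcases (Nat.dvd_prime Nat.prime_two).1 this with h | h
      · exact h
      · exfalso; rw [h] at h2; omega
    exact (Nat.Coprime.dvd_of_dvd_mul_left hcop hd)
  · rintro ⟨⟨hd, -⟩, hodd⟩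
    exact ⟨⟨hd.mul_left 2, by positivity⟩, hodd⟩






def gset (n : ℕ) : Set ℤ[i] := {z | z.norm = (n : ℤ)}

lemma norm_def (z : ℤ[i]) : z.norm = z.re * z.re + z.im * z.im := by
  simp [Zsqrtd.norm]

lemma gset_finite (n : ℕ) : (gset n).Finite := by
  have hsub : gset n ⊆ (fun q : ℤ × ℤ => (⟨q.1, q.2⟩ : ℤ[i])) ''
      ↑((Finset.Icc (-(n:ℤ)) n) ×ˢ (Finset.Icc (-(n:ℤ)) n)) := by
    intro z hz
    refine ⟨(z.re, z.im), ?_, by cases z; rfl⟩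
    have h : z.re * z.re + z.im * z.im = (n:ℤ) := by rw [← norm_def]; exact hz
    simp only [Finset.coe_product, Set.mem_prod, Finset.mem_coe, Finset.mem_Icc]
    refine ⟨⟨?_, ?_⟩, ?_, ?_⟩ <;>
      nlinarith [mul_self_nonneg z.re, mul_self_nonneg z.im, mul_self_nonneg (z.re - 1),
        mul_self_nonneg (z.re + 1), mul_self_nonneg (z.im - 1), mul_self_nonneg (z.im + 1)]
  exact Set.Finite.subset (Set.Finite.image _ (Finset.finite_toSet _)) hsub

lemma self_mul_star (z : ℤ[i]) : z * star z = (z.norm : ℤ[i]) := (Zsqrtd.norm_eq_mul_conj z).symm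

/-- An element of prime norm is prime. -/
lemma prime_of_norm_eq {π : ℤ[i]} {p : ℕ} (hp : p.Prime) (h : π.norm = (p : ℤ)) :
    Prime π := by
  rw [← UniqueFactorizationMonoid.irreducible_iff_prime]
  constructor
  · intro hu
    have h1 := Zsqrtd.norm_eq_one_iff.2 hu
    rw [h] at h1
    simp only [Int.natAbs_natCast] at h1
    exact hp.one_lt.ne' h1
  · intro a b hab
    have hnorm : (p : ℤ) = a.norm * b.norm := by rw [← h, hab, Zsqrtd.norm_mul]
    have hnat : p = a.norm.natAbs * b.norm.natAbs := by
      rw [← Int.natAbs_mul, ← hnorm, Int.natAbs_natCast]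
    have hdvd : a.norm.natAbs ∣ p := Dvd.intro _ hnat.symm
    rcases (Nat.dvd_prime hp).1 hdvd with h1 | h1
    · exact Or.inl (Zsqrtd.norm_eq_one_iff.1 h1)
    · right
      apply Zsqrtd.norm_eq_one_iff.1
      have hp0 : 0 < p := hp.pos
      rw [h1] at hnat
      nlinarith [hnat]

lemma units_re_im {c : ℤ[i]} (h : c.norm = 1) :
    (c.re = 1 ∧ c.im = 0) ∨ (c.re = -1 ∧ c.im = 0) ∨
      (c.re = 0 ∧ c.im = 1) ∨ (c.re = 0 ∧ c.im = -1) := by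
  have h' : c.re * c.re + c.im * c.im = 1 := by rw [← norm_def]; exact h
  by_cases hre : c.re = 0
  · have him : c.im * c.im = 1 := by rw [hre] at h'; linarith
    rcases Int.isUnit_iff.1 (IsUnit.of_mul_eq_one _ him) with h1 | h1
    · exact Or.inr (Or.inr (Or.inl ⟨hre, h1⟩))
    · exact Or.inr (Or.inr (Or.inr ⟨hre, h1⟩))
  · have h2 : 1 ≤ c.re * c.re := by
      rcases lt_or_gt_of_ne hre with h3 | h3 <;> nlinarith
    have him : c.im = 0 := by nlinarith [mul_self_nonneg c.im]
    have hre1 : c.re * c.re = 1 := by rw [him] at h'; linarith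
    rcases Int.isUnit_iff.1 (IsUnit.of_mul_eq_one _ hre1) with h1 | h1
    · exact Or.inl ⟨h1, him⟩
    · exact Or.inr (Or.inl ⟨h1, him⟩)

lemma not_prime_sq {p : ℕ} (hp : p.Prime) (a : ℤ) : (p : ℤ) ≠ a * a := by
  intro h
  have : p = a.natAbs * a.natAbs := by
    have h2 := congrArg Int.natAbs h
    simpa [Int.natAbs_mul] using h2
  have hdvd : a.natAbs ∣ p := Dvd.intro _ this.symm
  have hp0 := hp.two_le
  rcases (Nat.dvd_prime hp).1 hdvd with h1 | h1 <;> rw [h1] at this <;> nlinarith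

/-- π does not divide its conjugate, for π of prime norm p ≡ 1 mod 4. -/
lemma not_dvd_star {π : ℤ[i]} {p : ℕ} (hp : p.Prime) (hp1 : p % 4 = 1)
    (h : π.norm = (p : ℤ)) : ¬ π ∣ star π := by
  rintro ⟨c, hc⟩
  have hnormp : (star π).norm = (p : ℤ) := by rw [Zsqrtd.norm_conj, h]
  have hnormc : c.norm = 1 := by
    have h2 : (p : ℤ) * c.norm = (p : ℤ) := by
      rw [← h, ← Zsqrtd.norm_mul, ← hc]; exact Zsqrtd.norm_conj π
    have hp0 : ((p:ℤ)) ≠ 0 := by exact_mod_cast hp.pos.ne'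
    exact mul_left_cancel₀ hp0 (h2.trans (mul_one ((p:ℤ))).symm)
  have hre := congrArg Zsqrtd.re hc
  have him := congrArg Zsqrtd.im hc
  simp only [Zsqrtd.re_star, Zsqrtd.im_star, Zsqrtd.re_mul, Zsqrtd.im_mul] at hre him
  have hn : (p : ℤ) = π.re * π.re + π.im * π.im := by rw [← norm_def]; exact h.symm
  have hodd : ¬ (2 ∣ p) := by omega
  rcases units_re_im hnormc with ⟨h1, h2⟩ | ⟨h1, h2⟩ | ⟨h1, h2⟩ | ⟨h1, h2⟩ <;>
    rw [h1, h2] at hre him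
  · -- c = 1 : -b = b, so b = 0, p = a²
    have hb : π.im = 0 := by linarith [him]
    exact not_prime_sq hp π.re (by rw [hn, hb]; ring)
  · -- c = -1 : a = -a
    have ha : π.re = 0 := by nlinarith [hre]
    exact not_prime_sq hp π.im (by rw [hn, ha]; ring)
  · -- c = i : a = -b
    have hab : π.re = -π.im := by nlinarith [hre]
    apply hodd
    have : (2:ℤ) ∣ (p:ℤ) := ⟨π.im * π.im, by rw [hn, hab]; ring⟩
    exact_mod_cast this
  · -- c = -i : a = b
    have hab : π.re = π.im := by nlinarith [hre]
    apply hodd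
    have : (2:ℤ) ∣ (p:ℤ) := ⟨π.im * π.im, by rw [hn, hab]; ring⟩
    exact_mod_cast this







section Part3

variable {p : ℕ} {π : ℤ[i]}


/-- exact division of norms -/
lemma norm_div {q n : ℕ} (hq : 0 < q) (hqn : q ∣ n) {c w : ℤ[i]}
    (hc : c.norm = (q : ℤ)) (h : (c * w).norm = (n : ℤ)) : w.norm = ((n / q : ℕ) : ℤ) := by
  have h1 : (q : ℤ) * w.norm = (q : ℤ) * ((n / q : ℕ) : ℤ) := by
    have h2 : (q : ℤ) * w.norm = (n : ℤ) := by rw [← hc, ← Zsqrtd.norm_mul]; exact h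
    rw [h2, ← Nat.cast_mul, Nat.mul_div_cancel' hqn]
  exact mul_left_cancel₀ (by exact_mod_cast hq.ne') h1

/-- doubling: multiplication by 1+i maps gset m onto gset (2m) -/
lemma image_one_add_i (m : ℕ) :
    (fun w => (⟨1, 1⟩ : ℤ[i]) * w) '' gset m = gset (2 * m) := by
  have hnc : (⟨1, 1⟩ : ℤ[i]).norm = 2 := by simp [norm_def]
  ext z
  constructor
  · rintro ⟨w, hw, rfl⟩
    show Zsqrtd.norm _ = _
    rw [Zsqrtd.norm_mul, hnc, hw]
    push_cast; ring
  · intro hz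
    have h : z.re * z.re + z.im * z.im = ((2 * m : ℕ) : ℤ) := by
      rw [← norm_def]; exact hz
    have heven : Even (z.re + z.im) := by
      have h2 : (z.re * z.re + z.im * z.im) % 2 = 0 := by
        rw [h]; push_cast; omega
      have e1 : z.re * z.re % 2 = z.re % 2 := by
        rcases Int.emod_two_eq z.re with h' | h' <;> rw [Int.mul_emod, h'] <;> norm_num
      have e2 : z.im * z.im % 2 = z.im % 2 := by
        rcases Int.emod_two_eq z.im with h' | h' <;> rw [Int.mul_emod, h'] <;> norm_num
      rw [Int.even_add]
      rcases Int.emod_two_eq z.re with h' | h' <;> rcases Int.emod_two_eq z.im with h'' | h'' <;>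
        simp [Int.even_iff, h', h''] <;> omega
    obtain ⟨u, hu⟩ := heven
    have hwz : (⟨1, 1⟩ : ℤ[i]) * ⟨u, z.im - u⟩ = z := by
      ext <;> simp [Zsqrtd.re_mul, Zsqrtd.im_mul] <;> omega
    refine ⟨⟨u, z.im - u⟩, ?_, hwz⟩
    have h2 := norm_div (q := 2) (n := 2 * m) two_pos ⟨m, rfl⟩ hnc (by rw [hwz]; exact hz)
    simpa [gset] using h2

/-- key divisibility: if π is prime with π * star π = (p : ℤ[i]) and p ∣ n,
then for z ∈ gset n, π ∣ z ∨ star π ∣ z. -/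
lemma dvd_or_conj_dvd (hπ : Prime π) (h1 : π ∣ (p : ℤ[i]))
    {n : ℕ} (hpn : p ∣ n) {z : ℤ[i]} (hz : z ∈ gset n) :
    π ∣ z ∨ star π ∣ z := by
  have h2 : (p : ℤ[i]) ∣ (n : ℤ[i]) := map_dvd (Nat.castRingHom ℤ[i]) hpn
  have h3 : π ∣ z * star z := by
    rw [← Zsqrtd.norm_eq_mul_conj, hz]
    refine h1.trans ?_
    rw [show (((n : ℤ)) : ℤ[i]) = (n : ℤ[i]) by push_cast; rfl]
    exact h2
  rcases hπ.dvd_mul.1 h3 with h | h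
  · exact Or.inl h
  · right
    obtain ⟨k, hk⟩ := h
    exact ⟨star k, by rw [← star_star z, hk, star_mul']⟩


/-- image of gset (n/p) under multiplication by c of norm p is the divisible part -/
lemma image_dvd_part {n : ℕ} (hp : 0 < p) (hpn : p ∣ n) {c : ℤ[i]} (hc : c.norm = (p : ℤ)) :
    (fun w => c * w) '' gset (n / p) = {z ∈ gset n | c ∣ z} := by
  ext z
  constructor
  · rintro ⟨w, hw, rfl⟩
    refine ⟨?_, Dvd.intro _ rfl⟩
    show Zsqrtd.norm _ = _
    rw [Zsqrtd.norm_mul, hc, hw, ← Nat.cast_mul, Nat.mul_div_cancel' hpn]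
  · rintro ⟨hz, w, rfl⟩
    exact ⟨w, norm_div hp hpn hc hz, rfl⟩

end Part3









noncomputable def r (n : ℕ) : ℕ := (gset n).ncard

def tset (π : ℤ[i]) (n : ℕ) : Set ℤ[i] := {z ∈ gset n | ¬ π ∣ z}

lemma ncard_image (c : ℤ[i]) (hc : c ≠ 0) (A : Set ℤ[i]) :
    ((fun w => c * w) '' A).ncard = A.ncard :=
  Set.ncard_image_of_injective _ (mul_right_injective₀ hc)

lemma r_one : r 1 = 4 := by
  have h : gset 1 = ↑({⟨1,0⟩, ⟨-1,0⟩, ⟨0,1⟩, ⟨0,-1⟩} : Finset ℤ[i]) := by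
    ext z
    simp only [Finset.coe_insert, Set.mem_insert_iff, Finset.coe_singleton,
      Set.mem_singleton_iff]
    constructor
    · intro hz
      have h1 : z.norm = 1 := by simpa [gset] using hz
      rcases units_re_im h1 with ⟨h2, h3⟩ | ⟨h2, h3⟩ | ⟨h2, h3⟩ | ⟨h2, h3⟩ <;>
        simp [Zsqrtd.ext_iff, h2, h3]
    · intro hz
      rcases hz with rfl | rfl | rfl | rfl <;> simp [gset, norm_def]
  rw [r, h, Set.ncard_coe_finset]
  decide

section Pcase1

variable {p : ℕ} {π : ℤ[i]} (hp : p.Prime) (hπ : Prime π) (hnorm : π.norm = (p : ℤ))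
  (hps : π * star π = (p : ℤ[i])) (hnd : ¬ π ∣ star π)
include hp hπ hnorm hps hnd

lemma image_not_dvd_part {n : ℕ} (hpn : p ∣ n) :
    (fun w => star π * w) '' tset π (n / p) = {z ∈ gset n | ¬ π ∣ z} := by
  have hnormstar : (star π).norm = (p : ℤ) := by rw [Zsqrtd.norm_conj, hnorm]
  ext z
  constructor
  · rintro ⟨w, ⟨hw, hwnd⟩, rfl⟩
    constructor
    · show Zsqrtd.norm _ = _
      rw [Zsqrtd.norm_mul, hnormstar, hw, ← Nat.cast_mul, Nat.mul_div_cancel' hpn]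
    · intro hdvd
      rcases hπ.dvd_mul.1 hdvd with h | h
      · exact hnd h
      · exact hwnd h
  · rintro ⟨hz, hnz⟩
    have hd : star π ∣ z :=
      (dvd_or_conj_dvd hπ ⟨star π, hps.symm⟩ hpn hz).resolve_left hnz
    obtain ⟨w, rfl⟩ := hd
    exact ⟨w, ⟨norm_div hp.pos hpn hnormstar hz,
      fun hw => hnz (hw.mul_left (star π))⟩, rfl⟩

lemma r_split {n : ℕ} (hpn : p ∣ n) :
    r n = r (n / p) + (tset π (n / p)).ncard := by
  have hA : {z ∈ gset n | π ∣ z} ∪ {z ∈ gset n | ¬ π ∣ z} = gset n := by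
    ext z; by_cases h : π ∣ z <;> simp [h]
  have hdisj : Disjoint {z ∈ gset n | π ∣ z} {z ∈ gset n | ¬ π ∣ z} := by
    rw [Set.disjoint_iff]
    rintro z ⟨⟨-, h1⟩, -, h2⟩
    exact absurd h1 h2
  have hfin1 : {z ∈ gset n | π ∣ z}.Finite :=
    (gset_finite n).subset (Set.sep_subset _ _)
  have hfin2 : {z ∈ gset n | ¬ π ∣ z}.Finite :=
    (gset_finite n).subset (Set.sep_subset _ _)
  have := Set.ncard_union_eq hdisj hfin1 hfin2
  rw [hA] at this
  rw [r, this, ← image_dvd_part hp.pos hpn hnorm,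
    ← image_not_dvd_part hp hπ hnorm hps hnd hpn,
    ncard_image _ hπ.ne_zero, ncard_image _ (by simpa using hπ.ne_zero)]
  rfl

lemma tset_ncard_step {n : ℕ} (hpn : p ∣ n) :
    (tset π n).ncard = (tset π (n / p)).ncard := by
  have h : tset π n = (fun w => star π * w) '' tset π (n / p) :=
    (image_not_dvd_part hp hπ hnorm hps hnd hpn).symm
  rw [h, ncard_image _ (by simpa using hπ.ne_zero)]

lemma tset_eq_gset {m : ℕ} (hpm : ¬ p ∣ m) : tset π m = gset m := by
  ext z
  simp only [tset, Set.mem_setOf_eq, Set.mem_sep_iff, and_iff_left_iff_imp]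
  intro hz hdvd
  obtain ⟨w, rfl⟩ := hdvd
  apply hpm
  have : (p : ℤ) ∣ (m : ℤ) := ⟨w.norm, by rw [← hz, Zsqrtd.norm_mul, hnorm]⟩
  exact_mod_cast this

lemma tset_pow {m : ℕ} (hpm : ¬ p ∣ m) : ∀ j, (tset π (p ^ j * m)).ncard = r m := by
  intro j
  induction j with
  | zero => rw [pow_zero, one_mul, tset_eq_gset hp hπ hnorm hps hnd hpm]; rfl
  | succ j ih =>
    have hdvd : p ∣ p ^ (j + 1) * m := Dvd.dvd.mul_right (dvd_pow_self p (Nat.succ_ne_zero j)) m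
    have hdiv : p ^ (j + 1) * m / p = p ^ j * m := by
      rw [pow_succ, mul_comm (p ^ j) p, mul_assoc, Nat.mul_div_cancel_left _ hp.pos]
    rw [tset_ncard_step hp hπ hnorm hps hnd hdvd, hdiv, ih]

lemma r_pow {m : ℕ} (hpm : ¬ p ∣ m) : ∀ k, r (p ^ k * m) = (k + 1) * r m := by
  intro k
  induction k with
  | zero => rw [pow_zero, one_mul]; ring
  | succ k ih =>
    have hdvd : p ∣ p ^ (k + 1) * m := Dvd.dvd.mul_right (dvd_pow_self p (Nat.succ_ne_zero k)) m
    have hdiv : p ^ (k + 1) * m / p = p ^ k * m := by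
      rw [pow_succ, mul_comm (p ^ k) p, mul_assoc, Nat.mul_div_cancel_left _ hp.pos]
    rw [r_split hp hπ hnorm hps hnd hdvd, hdiv, ih,
      tset_pow hp hπ hnorm hps hnd hpm k]
    ring

end Pcase1

section Pcase3

variable {p : ℕ} (hp : p.Prime) (hp3 : p % 4 = 3)
include hp hp3

lemma p3_dvd {n : ℕ} (hpn : p ∣ n) {z : ℤ[i]} (hz : z ∈ gset n) : (p : ℤ[i]) ∣ z := by
  haveI : Fact p.Prime := ⟨hp⟩
  have hprime : Prime (p : ℤ[i]) := GaussianInt.prime_of_nat_prime_of_mod_four_eq_three p hp3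
  have := dvd_or_conj_dvd hprime dvd_rfl hpn hz
  rcases this with h | h
  · exact h
  · rwa [star_natCast] at h

lemma p3_norm : ((p : ℤ[i])).norm = ((p ^ 2 : ℕ) : ℤ) := by
  rw [show ((p : ℤ[i])) = (⟨(p : ℤ), 0⟩ : ℤ[i]) by ext <;> simp]
  rw [norm_def]
  push_cast; ring

lemma p3_r_eq {n : ℕ} (hp2n : p ^ 2 ∣ n) : r n = r (n / p ^ 2) := by
  have himg := image_dvd_part (p := p ^ 2) (n := n) (pow_pos hp.pos 2) hp2n (p3_norm hp hp3)
  have hall : {z ∈ gset n | ((p : ℕ) : ℤ[i]) ∣ z} = gset n := by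
    ext z
    simp only [Set.mem_sep_iff, and_iff_left_iff_imp]
    exact fun hz => p3_dvd hp hp3 ((dvd_pow_self p two_ne_zero).trans hp2n) hz
  have hne : ((p : ℕ) : ℤ[i]) ≠ 0 := Nat.cast_ne_zero.2 hp.pos.ne'
  rw [r, ← hall, ← himg, ncard_image _ hne]
  rfl

lemma p3_empty {n : ℕ} (hpn : p ∣ n) (h2 : ¬ p ^ 2 ∣ n) : gset n = ∅ := by
  ext z
  simp only [Set.mem_empty_iff_false, iff_false]
  intro hz
  obtain ⟨w, rfl⟩ := p3_dvd hp hp3 hpn hz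
  apply h2
  have : ((p ^ 2 : ℕ) : ℤ) ∣ (n : ℤ) :=
    ⟨w.norm, by rw [← hz, Zsqrtd.norm_mul, p3_norm hp hp3]⟩
  exact_mod_cast this

end Pcase3


lemma r_two_mul (m : ℕ) : r (2 * m) = r m := by
  rw [r, ← image_one_add_i m, ncard_image _ (by simp [Zsqrtd.ext_iff]), r]

theorem main : ∀ n, 0 < n → ((r n : ℤ)) = 4 * G n := by
  intro n
  induction n using Nat.strong_induction_on with
  | _ n ih =>
    intro hn
    rcases Nat.lt_or_ge n 2 with h2 | h2
    · interval_cases n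
      rw [r_one, G_one]; norm_num
    · have hp : n.minFac.Prime := Nat.minFac_prime (by omega)
      set p := n.minFac with hpdef
      have hpn : p ∣ n := Nat.minFac_dvd n
      by_cases hp2 : p = 2
      · obtain ⟨m, hm⟩ := hpn
        rw [hp2] at hm
        have hm0 : 0 < m := by omega
        rw [hm, r_two_mul, G_two_mul hm0]
        exact ih m (by omega) hm0
      · have hodd : p % 2 = 1 := hp.eq_two_or_odd.resolve_left hp2
        set k := n.factorization p with hkdef
        set m := ordCompl[p] n with hmdef
        have hfact : p ^ k * m = n := Nat.ordProj_mul_ordCompl_eq_self n p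
        have hpm : ¬ p ∣ m := Nat.not_dvd_ordCompl hp (by omega)
        have hk1 : 1 ≤ k := hp.factorization_pos_of_dvd (by omega) hpn
        have hm0 : 0 < m := Nat.ordCompl_pos p (by omega)
        have hcop : Nat.Coprime (p ^ k) m := (hp.coprime_iff_not_dvd.2 hpm).pow_left _
        have hG : G n = G (p ^ k) * G m := by rw [← hfact]; exact G_mul hcop
        have hp2k : 2 ≤ p ^ k := le_trans hp.two_le (Nat.le_self_pow (by omega) p)
        have hmn : m < n := by nlinarith [hfact]
        rcases (by omega : p % 4 = 1 ∨ p % 4 = 3) with hp4 | hp4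
        · haveI : Fact p.Prime := ⟨hp⟩
          obtain ⟨a, b, hab⟩ := Nat.Prime.sq_add_sq (p := p) (by omega)
          set π : ℤ[i] := ⟨(a : ℤ), (b : ℤ)⟩ with hπdef
          have hnorm : π.norm = (p : ℤ) := by
            rw [norm_def]
            show (a : ℤ) * a + (b : ℤ) * b = (p : ℤ)
            rw [← hab]; push_cast; ring
          have hπ : Prime π := prime_of_norm_eq hp hnorm
          have hps : π * star π = ((p : ℕ) : ℤ[i]) := by
            rw [← Zsqrtd.norm_eq_mul_conj, hnorm]; push_cast; rfl
          have hnd := not_dvd_star hp hp4 hnorm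
          have hr : r n = (k + 1) * r m := by
            rw [← hfact]; exact r_pow hp hπ hnorm hps hnd hpm k
          rw [hr, hG, G_prime_pow_one hp hp4 k]
          push_cast
          rw [ih m hmn hm0]
          ring
        · by_cases hsq : p ^ 2 ∣ n
          · set n' := n / p ^ 2 with hn'def
            have hn'eq : p ^ 2 * n' = n := Nat.mul_div_cancel' hsq
            have hk2 : 2 ≤ k := (Nat.Prime.pow_dvd_iff_le_factorization hp (by omega)).1 hsq
            have hrr : r n = r n' := p3_r_eq hp hp4 hsq
            have hfact' : p ^ (k - 2) * m = n' := by
              have h5 : p ^ 2 * (p ^ (k - 2) * m) = p ^ 2 * n' := by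
                rw [hn'eq, ← hfact, ← mul_assoc, ← pow_add]
                congr 2
                omega
              exact Nat.eq_of_mul_eq_mul_left (pow_pos hp.pos 2) h5
            have hG' : G n' = G (p ^ (k - 2)) * G m := by
              rw [← hfact']; exact G_mul ((hp.coprime_iff_not_dvd.2 hpm).pow_left _)
            have hGpk : G (p ^ k) = G (p ^ (k - 2)) := by
              rw [G_prime_pow_three hp hp4, G_prime_pow_three hp hp4]
              have heq : Even k ↔ Even (k - 2) := by
                rw [Nat.even_sub hk2]
                simp
              by_cases he : Even k
              · rw [if_pos he, if_pos (heq.1 he)]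
              · rw [if_neg he, if_neg (fun h => he (heq.2 h))]
            have hn'0 : 0 < n' := Nat.div_pos (Nat.le_of_dvd (by omega) hsq) (pow_pos hp.pos 2)
            have hn'lt : n' < n := Nat.div_lt_self (by omega) (by nlinarith [hp.two_le])
            rw [hrr, ih n' hn'lt hn'0, hG, hG', hGpk]
          · have hkone : k = 1 := by
              have h6 : ¬ 2 ≤ k :=
                fun h => hsq ((Nat.Prime.pow_dvd_iff_le_factorization hp (by omega)).2 h)
              omega
            have hempty : gset n = ∅ := p3_empty hp hp4 hpn hsq
            have hr0 : r n = 0 := by rw [r, hempty, Set.ncard_empty]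
            rw [hr0, hG, hkone, G_prime_pow_three hp hp4]
            norm_num

lemma G_eq_cards (n : ℕ) :
    G n = ((n.divisors.filter fun d => d % 4 = 1).card : ℤ) -
          ((n.divisors.filter fun d => d % 4 = 3).card : ℤ) := by
  rw [G]
  have h : ∀ d : ℕ, chi4 d = (if d % 4 = 1 then (1 : ℤ) else 0) -
      (if d % 4 = 3 then (1 : ℤ) else 0) := by
    intro d
    unfold chi4
    split_ifs <;> omega
  rw [Finset.sum_congr rfl fun d _ => h d, Finset.sum_sub_distrib,
    Finset.sum_boole, Finset.sum_boole]

lemma pairs_eq (N : ℕ) :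
    {p : ℤ × ℤ | p.1 ^ 2 + p.2 ^ 2 = (N : ℤ)}.ncard = r N := by
  have hinj : Function.Injective (fun q : ℤ × ℤ => (⟨q.1, q.2⟩ : ℤ[i])) := by
    intro q1 q2 h
    rw [Zsqrtd.ext_iff] at h
    exact Prod.ext h.1 h.2
  have himg : (fun q : ℤ × ℤ => (⟨q.1, q.2⟩ : ℤ[i])) ''
      {p : ℤ × ℤ | p.1 ^ 2 + p.2 ^ 2 = (N : ℤ)} = gset N := by
    ext z
    constructor
    · rintro ⟨⟨a, b⟩, hq, rfl⟩
      show Zsqrtd.norm _ = _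
      rw [norm_def]
      simp only [Set.mem_setOf_eq] at hq
      rw [← hq]; ring
    · intro hz
      refine ⟨(z.re, z.im), ?_, by cases z; rfl⟩
      show z.re ^ 2 + z.im ^ 2 = (N : ℤ)
      have hz' : z.re * z.re + z.im * z.im = (N : ℤ) := by rw [← norm_def]; exact hz
      rw [← hz']; ring
  rw [r, ← himg, Set.ncard_image_of_injective _ hinj]

end Jacobi2Sq

/-- For every positive integer `N`, the number of pairs `(a,b) ∈ ℤ × ℤ` with
`a² + b² = N` equals `4 · (e₁(N) − e₃(N))`, where `eⱼ(N)` is the number of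
positive divisors of `N` congruent to `j` modulo `4`. -/
theorem count_QG_eq_four_mul_divisor_difference (N : ℕ) (hN : 0 < N) :
    (Set.ncard {p : ℤ × ℤ | p.1 ^ 2 + p.2 ^ 2 = (N : ℤ)} : ℤ) =
      4 * (((N.divisors.filter fun d => d % 4 = 1).card : ℤ) -
           ((N.divisors.filter fun d => d % 4 = 3).card : ℤ)) := by
  rw [Jacobi2Sq.pairs_eq N, Jacobi2Sq.main N hN, Jacobi2Sq.G_eq_cards N]
end

section
/- Let N be a positive integer. If every prime q with q ≡ 2 (mod 3) divides N to an even power (i.e., the q-adic valuation of N is even for all such q), then d₁(N) − d₂(N) equals the product over all primes p ≡ 1 (mod 3) of (v_p(N) + 1), where v_p(N) is the p-adic valuation of N. Otherwise (if some prime q ≡ 2 (mod 3) divides N to an odd power), d₁(N) − d₂(N) = 0. -/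
open Finset ArithmeticFunction

private def chi (d : ℕ) : ℤ := if d % 3 = 1 then 1 else if d % 3 = 2 then -1 else 0

private lemma chi_mul (a b : ℕ) : chi (a * b) = chi a * chi b := by
  unfold chi
  rw [Nat.mul_mod]
  have ha : a % 3 = 0 ∨ a % 3 = 1 ∨ a % 3 = 2 := by omega
  have hb : b % 3 = 0 ∨ b % 3 = 1 ∨ b % 3 = 2 := by omega
  rcases ha with h | h | h <;> rcases hb with h' | h' | h' <;> simp [h, h']

private lemma chi_pow (p k : ℕ) : chi (p ^ k) = (chi p) ^ k := by
  induction k with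
  | zero => simp [chi]
  | succ n ih => rw [pow_succ, pow_succ, chi_mul, ih]

private lemma sum_neg_one_pow (n : ℕ) :
    ∑ i ∈ range n, ((-1 : ℤ)) ^ i = if Even n then 0 else 1 := by
  induction n with
  | zero => simp
  | succ n ih =>
    rw [Finset.sum_range_succ, ih]
    rcases Nat.even_or_odd n with h | h
    · simp [h, Nat.even_add_one, Nat.not_even_iff_odd.mpr, h.neg_one_pow,
        Nat.not_even_iff_odd.mpr (Even.add_one h)]
    · simp [Nat.not_even_iff_odd.mpr h, h.neg_one_pow, Odd.add_one h]

private def chiA : ArithmeticFunction ℤ := ⟨chi, by simp [chi]⟩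

private lemma chiA_mult : chiA.IsMultiplicative :=
  ⟨by simp [chiA, chi], fun {m n} _ => chi_mul m n⟩

private def F : ArithmeticFunction ℤ := (zeta : ArithmeticFunction ℤ) * chiA

private lemma F_mult : F.IsMultiplicative :=
  ArithmeticFunction.isMultiplicative_zeta.natCast.mul chiA_mult

private lemma F_apply (n : ℕ) : F n = ∑ d ∈ n.divisors, chi d := by
  rw [show F = (zeta : ArithmeticFunction ℤ) * chiA from rfl,
    ArithmeticFunction.coe_zeta_mul_apply]
  rfl

private lemma F_prime_pow {p : ℕ} (hp : p.Prime) (k : ℕ) :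
    F (p ^ k) = if p % 3 = 1 then (k : ℤ) + 1
      else if p % 3 = 2 then (if Even k then 1 else 0) else 1 := by
  rw [F_apply, Nat.sum_divisors_prime_pow hp]
  simp only [chi_pow]
  have hp3 : p % 3 = 0 ∨ p % 3 = 1 ∨ p % 3 = 2 := by omega
  rcases hp3 with h | h | h
  · -- chi p = 0
    have : chi p = 0 := by simp [chi, h]
    rw [this]
    simp [h, Finset.sum_range_succ', zero_pow, Finset.sum_ite_eq]
  · have : chi p = 1 := by simp [chi, h]
    simp [this, h]
  · have : chi p = -1 := by simp [chi, h]
    rw [this, sum_neg_one_pow]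
    rcases Nat.even_or_odd k with hk | hk
    · simp [h, hk, Nat.not_even_iff_odd.mpr (Even.add_one hk)]
    · simp [h, Nat.not_even_iff_odd.mpr hk, Odd.add_one hk]

/-- Let `N` be a positive integer. If every prime `q ≡ 2 (mod 3)` divides `N` to an
even power, then `d₁(N) − d₂(N)` equals the product over all primes `p ≡ 1 (mod 3)` of
`v_p(N) + 1`; otherwise `d₁(N) − d₂(N) = 0`. Here `dⱼ(N)` is the number of positive
divisors of `N` congruent to `j` modulo `3` and `v_p(N)` the `p`-adic valuation. -/
theorem divisor_difference_mod_three (N : ℕ) (hN : 0 < N) :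
    ((∀ q : ℕ, q.Prime → q % 3 = 2 → Even (N.factorization q)) →
      ((N.divisors.filter fun d => d % 3 = 1).card : ℤ) -
        ((N.divisors.filter fun d => d % 3 = 2).card : ℤ) =
        ∏ᶠ p ∈ {p : ℕ | p.Prime ∧ p % 3 = 1}, ((N.factorization p : ℤ) + 1)) ∧
    ((∃ q : ℕ, q.Prime ∧ q % 3 = 2 ∧ ¬ Even (N.factorization q)) →
      ((N.divisors.filter fun d => d % 3 = 1).card : ℤ) -
        ((N.divisors.filter fun d => d % 3 = 2).card : ℤ) = 0) := by
  have hN0 : N ≠ 0 := hN.ne'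
  -- Step 1: the LHS is F N
  have hF : ((N.divisors.filter fun d => d % 3 = 1).card : ℤ) -
      ((N.divisors.filter fun d => d % 3 = 2).card : ℤ) = F N := by
    rw [F_apply]
    have h1 : ((N.divisors.filter fun d => d % 3 = 1).card : ℤ) =
        ∑ d ∈ N.divisors, (if d % 3 = 1 then (1 : ℤ) else 0) := by
      rw [Finset.card_filter]
      push_cast
      rfl
    have h2 : ((N.divisors.filter fun d => d % 3 = 2).card : ℤ) =
        ∑ d ∈ N.divisors, (if d % 3 = 2 then (1 : ℤ) else 0) := by
      rw [Finset.card_filter]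
      push_cast
      rfl
    rw [h1, h2, ← Finset.sum_sub_distrib]
    apply Finset.sum_congr rfl
    intro d _
    unfold chi
    have : d % 3 = 0 ∨ d % 3 = 1 ∨ d % 3 = 2 := by omega
    rcases this with h | h | h <;> simp [h]
  -- Step 2: factorization formula
  have hfac : F N = ∏ p ∈ N.primeFactors,
      (if p % 3 = 1 then (N.factorization p : ℤ) + 1
        else if p % 3 = 2 then (if Even (N.factorization p) then 1 else 0) else 1) := by
    rw [F_mult.multiplicative_factorization F hN0,
      Nat.prod_factorization_eq_prod_primeFactors]
    apply Finset.prod_congr rfl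
    intro p hp
    exact F_prime_pow (Nat.prime_of_mem_primeFactors hp) _
  constructor
  · intro hall
    rw [hF, hfac]
    have hprod : (∏ p ∈ N.primeFactors,
        (if p % 3 = 1 then (N.factorization p : ℤ) + 1
          else if p % 3 = 2 then (if Even (N.factorization p) then 1 else 0) else 1))
        = ∏ p ∈ N.primeFactors.filter (fun p => p % 3 = 1),
            ((N.factorization p : ℤ) + 1) := by
      rw [← Finset.prod_filter_mul_prod_filter_not N.primeFactors (fun p => p % 3 = 1)]
      have hA : (∏ p ∈ N.primeFactors.filter (fun p => p % 3 = 1),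
          (if p % 3 = 1 then (N.factorization p : ℤ) + 1
            else if p % 3 = 2 then (if Even (N.factorization p) then 1 else 0) else 1))
          = ∏ p ∈ N.primeFactors.filter (fun p => p % 3 = 1),
              ((N.factorization p : ℤ) + 1) := by
        apply Finset.prod_congr rfl
        intro p hp
        simp [(Finset.mem_filter.mp hp).2]
      have hB : (∏ p ∈ N.primeFactors.filter (fun p => ¬ p % 3 = 1),
          (if p % 3 = 1 then (N.factorization p : ℤ) + 1
            else if p % 3 = 2 then (if Even (N.factorization p) then 1 else 0) else 1))
          = 1 := by
        apply Finset.prod_eq_one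
        intro p hp
        obtain ⟨hp1, hp2⟩ := Finset.mem_filter.mp hp
        have hpp := Nat.prime_of_mem_primeFactors hp1
        by_cases h2 : p % 3 = 2
        · simp [hp2, h2, hall p hpp h2]
        · simp [hp2, h2]
      rw [hA, hB, mul_one]
    rw [hprod]
    symm
    apply finprod_mem_eq_prod_of_subset
    · rintro p ⟨⟨hpp, hp1⟩, hsupp⟩
      rw [Finset.mem_coe, Finset.mem_filter]
      refine ⟨Nat.mem_primeFactors.mpr ⟨hpp, Nat.dvd_of_factorization_pos ?_, hN0⟩, hp1⟩
      intro h0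
      exact hsupp (by simp [h0])
    · intro p hp
      obtain ⟨hp1, hp2⟩ := Finset.mem_filter.mp hp
      exact ⟨Nat.prime_of_mem_primeFactors hp1, hp2⟩
  · rintro ⟨q, hq, hq2, hqodd⟩
    rw [hF, hfac]
    apply Finset.prod_eq_zero (i := q)
    · exact Nat.mem_primeFactors.mpr
        ⟨hq, Nat.dvd_of_factorization_pos fun h0 => hqodd (by simp [h0]), hN0⟩
    · have : ¬ q % 3 = 1 := by omega
      simp [this, hq2, hqodd]
end

section
/- For every nonnegative integer N, the number of pairs (x,y) ∈ ℤ × ℤ with x² − x·y + y² = N equals the number of pairs (k,l) ∈ ℤ × ℤ with k² + 3l² = N plus the number of pairs (k,l) ∈ ℤ × ℤ with (2k+1)² + 3(2l+1)² = 4N. -/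
private lemma finB (N : ℕ) : {q : ℤ × ℤ | q.1 ^ 2 + 3 * q.2 ^ 2 = 4 * (N : ℤ)}.Finite := by
  apply Set.Finite.subset (Set.finite_Icc ((-(4 * (N : ℤ)), -(4 * (N : ℤ))) : ℤ × ℤ)
    ((4 * N, 4 * N) : ℤ × ℤ))
  rintro ⟨m, n⟩ h
  simp only [Set.mem_setOf_eq] at h
  simp only [Set.mem_Icc, Prod.le_def]
  refine ⟨⟨?_, ?_⟩, ?_, ?_⟩
  · nlinarith [sq_nonneg (m + 4 * (N : ℤ)), sq_nonneg n, sq_nonneg m]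
  · nlinarith [sq_nonneg (n + 4 * (N : ℤ)), sq_nonneg n, sq_nonneg m]
  · nlinarith [sq_nonneg (m - 4 * (N : ℤ)), sq_nonneg n, sq_nonneg m]
  · nlinarith [sq_nonneg (n - 4 * (N : ℤ)), sq_nonneg n, sq_nonneg m]

private lemma parB {N : ℕ} {m n : ℤ} (h : m ^ 2 + 3 * n ^ 2 = 4 * (N : ℤ)) :
    (Even m ↔ Even n) := by
  have h2 : Even (m ^ 2 + 3 * n ^ 2) := by rw [h]; exact ⟨2 * N, by ring⟩
  simp only [Int.even_add, Int.even_mul, Int.even_pow] at h2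
  have h3 : ¬ Even (3 : ℤ) := by rw [Int.even_iff]; decide
  tauto

private lemma img1 (N : ℕ) :
    (fun p : ℤ × ℤ => (p.1 + p.2, p.1 - p.2)) ''
      {p : ℤ × ℤ | p.1 ^ 2 - p.1 * p.2 + p.2 ^ 2 = (N : ℤ)} =
    {q : ℤ × ℤ | q.1 ^ 2 + 3 * q.2 ^ 2 = 4 * (N : ℤ)} := by
  ext ⟨m, n⟩
  simp only [Set.mem_image, Set.mem_setOf_eq, Prod.mk.injEq, Prod.exists]
  constructor
  · rintro ⟨x, y, hxy, rfl, rfl⟩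
    linear_combination 4 * hxy
  · intro h
    have hp := parB h
    have hmn : Even (m + n) := Int.even_add.mpr hp
    have hmn' : Even (m - n) := Int.even_sub.mpr hp
    obtain ⟨c, hc⟩ := hmn
    obtain ⟨d, hd⟩ := hmn'
    have h1 : c + d = m := by omega
    have h2 : c - d = n := by omega
    refine ⟨c, d, ?_, h1, h2⟩
    have h3 : (c + d) ^ 2 + 3 * (c - d) ^ 2 = 4 * (N : ℤ) := by rw [h1, h2]; exact h
    have h4 : 4 * (c ^ 2 - c * d + d ^ 2) = 4 * (N : ℤ) := by linear_combination h3
    linarith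

private lemma img2 (N : ℕ) :
    (fun p : ℤ × ℤ => (2 * p.1, 2 * p.2)) ''
      {p : ℤ × ℤ | p.1 ^ 2 + 3 * p.2 ^ 2 = (N : ℤ)} =
    {q : ℤ × ℤ | q.1 ^ 2 + 3 * q.2 ^ 2 = 4 * (N : ℤ) ∧ Even q.1} := by
  ext ⟨m, n⟩
  simp only [Set.mem_image, Set.mem_setOf_eq, Prod.mk.injEq, Prod.exists]
  constructor
  · rintro ⟨k, l, hkl, rfl, rfl⟩
    exact ⟨by linear_combination 4 * hkl, ⟨k, by ring⟩⟩
  · rintro ⟨h, hm⟩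
    have hn : Even n := (parB h).mp hm
    obtain ⟨k, hk⟩ := hm
    obtain ⟨l, hl⟩ := hn
    have h1 : 2 * k = m := by omega
    have h2 : 2 * l = n := by omega
    refine ⟨k, l, ?_, h1, h2⟩
    have h3 : (2 * k) ^ 2 + 3 * (2 * l) ^ 2 = 4 * (N : ℤ) := by rw [h1, h2]; exact h
    have h4 : 4 * (k ^ 2 + 3 * l ^ 2) = 4 * (N : ℤ) := by linear_combination h3
    linarith

private lemma img3 (N : ℕ) :
    (fun p : ℤ × ℤ => (2 * p.1 + 1, 2 * p.2 + 1)) ''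
      {p : ℤ × ℤ | (2 * p.1 + 1) ^ 2 + 3 * (2 * p.2 + 1) ^ 2 = 4 * (N : ℤ)} =
    {q : ℤ × ℤ | q.1 ^ 2 + 3 * q.2 ^ 2 = 4 * (N : ℤ) ∧ ¬ Even q.1} := by
  ext ⟨m, n⟩
  simp only [Set.mem_image, Set.mem_setOf_eq, Prod.mk.injEq, Prod.exists]
  constructor
  · rintro ⟨k, l, hkl, rfl, rfl⟩
    refine ⟨hkl, ?_⟩
    simp [Int.even_add_one, parity_simps]
  · rintro ⟨h, hm⟩
    have hn : ¬ Even n := fun he => hm ((parB h).mpr he)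
    obtain ⟨k, hk⟩ := Int.not_even_iff_odd.mp hm
    obtain ⟨l, hl⟩ := Int.not_even_iff_odd.mp hn
    exact ⟨k, l, by rw [← hk, ← hl]; exact h, hk.symm, hl.symm⟩

/-- For every nonnegative integer `N`, the number of pairs `(x,y) ∈ ℤ × ℤ` with
`x² − x·y + y² = N` equals the number of pairs `(k,l)` with `k² + 3l² = N` plus
the number of pairs `(k,l)` with `(2k+1)² + 3(2l+1)² = 4N`. -/
theorem count_QF_eq_count_even_add_count_odd (N : ℕ) :
    Set.ncard {p : ℤ × ℤ | p.1 ^ 2 - p.1 * p.2 + p.2 ^ 2 = (N : ℤ)} =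
      Set.ncard {p : ℤ × ℤ | p.1 ^ 2 + 3 * p.2 ^ 2 = (N : ℤ)} +
      Set.ncard {p : ℤ × ℤ |
        (2 * p.1 + 1) ^ 2 + 3 * (2 * p.2 + 1) ^ 2 = 4 * (N : ℤ)} := by
  have hf : Function.Injective (fun p : ℤ × ℤ => (p.1 + p.2, p.1 - p.2)) := by
    rintro ⟨a, b⟩ ⟨c, d⟩ h
    simp only [Prod.mk.injEq] at h ⊢
    omega
  have hg1 : Function.Injective (fun p : ℤ × ℤ => (2 * p.1, 2 * p.2)) := by
    rintro ⟨a, b⟩ ⟨c, d⟩ h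
    simp only [Prod.mk.injEq] at h ⊢
    omega
  have hg2 : Function.Injective (fun p : ℤ × ℤ => (2 * p.1 + 1, 2 * p.2 + 1)) := by
    rintro ⟨a, b⟩ ⟨c, d⟩ h
    simp only [Prod.mk.injEq] at h ⊢
    omega
  have e1 : Set.ncard {p : ℤ × ℤ | p.1 ^ 2 - p.1 * p.2 + p.2 ^ 2 = (N : ℤ)}
      = Set.ncard {q : ℤ × ℤ | q.1 ^ 2 + 3 * q.2 ^ 2 = 4 * (N : ℤ)} := by
    rw [← img1 N, Set.ncard_image_of_injective _ hf]
  have e2 : Set.ncard {p : ℤ × ℤ | p.1 ^ 2 + 3 * p.2 ^ 2 = (N : ℤ)}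
      = Set.ncard {q : ℤ × ℤ | q.1 ^ 2 + 3 * q.2 ^ 2 = 4 * (N : ℤ) ∧ Even q.1} := by
    rw [← img2 N, Set.ncard_image_of_injective _ hg1]
  have e3 : Set.ncard {p : ℤ × ℤ | (2 * p.1 + 1) ^ 2 + 3 * (2 * p.2 + 1) ^ 2 = 4 * (N : ℤ)}
      = Set.ncard {q : ℤ × ℤ | q.1 ^ 2 + 3 * q.2 ^ 2 = 4 * (N : ℤ) ∧ ¬ Even q.1} := by
    rw [← img3 N, Set.ncard_image_of_injective _ hg2]
  rw [e1, e2, e3]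
  have hunion : {q : ℤ × ℤ | q.1 ^ 2 + 3 * q.2 ^ 2 = 4 * (N : ℤ)} =
      {q : ℤ × ℤ | q.1 ^ 2 + 3 * q.2 ^ 2 = 4 * (N : ℤ) ∧ Even q.1} ∪
      {q : ℤ × ℤ | q.1 ^ 2 + 3 * q.2 ^ 2 = 4 * (N : ℤ) ∧ ¬ Even q.1} := by
    ext q
    simp only [Set.mem_setOf_eq, Set.mem_union]
    tauto
  rw [hunion]
  apply Set.ncard_union_eq
  · rw [Set.disjoint_left]
    rintro q ⟨-, h1⟩ ⟨-, h2⟩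
    exact h2 h1
  · exact (finB N).subset (by intro q hq; exact hq.1)
  · exact (finB N).subset (by intro q hq; exact hq.1)
end

section
/- For every real number q with 0 < q < 1, the family (q^{x² − x·y + y²})_{(x,y) ∈ ℤ×ℤ} is summable, and ∑_{(x,y) ∈ ℤ×ℤ} q^{x² − x·y + y²} = (∑_{n ∈ ℤ} q^{n²})·(∑_{n ∈ ℤ} q^{3n²}) + (∑_{n ∈ ℤ} q^{(2n+1)²/4})·(∑_{n ∈ ℤ} q^{3(2n+1)²/4}), where the fractional powers are real powers of q and each of the four series on the right is absolutely convergent. -/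
open Real

private lemma summable_aux {q : ℝ} (hq0 : 0 < q) (hq1 : q < 1) {E : ℤ → ℝ}
    (hE : ∀ n : ℤ, |(n : ℝ)| - 1 ≤ E n) : Summable fun n : ℤ => q ^ E n := by
  have hbase : Summable fun n : ℤ => q⁻¹ * q ^ n.natAbs := by
    apply Summable.mul_left
    apply Summable.of_nat_of_neg <;>
      simpa using summable_geometric_of_lt_one hq0.le hq1
  apply hbase.of_nonneg_of_le (fun n => (Real.rpow_pos_of_pos hq0 _).le)
  intro n
  have h1 : q ^ E n ≤ q ^ (|(n : ℝ)| - 1) :=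
    Real.rpow_le_rpow_of_exponent_ge hq0 hq1.le (hE n)
  have h2 : q ^ (|(n : ℝ)| - 1) = q⁻¹ * q ^ n.natAbs := by
    rw [sub_eq_add_neg, add_comm, Real.rpow_add hq0, Real.rpow_neg_one]
    congr 1
    have : |(n : ℝ)| = ((n.natAbs : ℕ) : ℝ) := by
      rw [Nat.cast_natAbs, Int.cast_abs]
    rw [this, Real.rpow_natCast]
  linarith

private def evenSet : Set (ℤ × ℤ) := {p : ℤ × ℤ | p.2 % 2 = 0}

private def evenEquiv : (ℤ × ℤ) ≃ evenSet where
  toFun nm := ⟨(nm.1 + nm.2, 2 * nm.2), by simp [evenSet]⟩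
  invFun p := (p.1.1 - p.1.2 / 2, p.1.2 / 2)
  left_inv nm := by ext <;> simp <;> omega
  right_inv p := by
    have h := p.2
    simp only [evenSet, Set.mem_setOf_eq] at h
    ext <;> simp <;> omega

private def oddEquiv : (ℤ × ℤ) ≃ (evenSetᶜ : Set (ℤ × ℤ)) where
  toFun nm := ⟨(nm.1 + nm.2 + 1, 2 * nm.2 + 1), by simp [evenSet]⟩
  invFun p := (p.1.1 - (p.1.2 - 1) / 2 - 1, (p.1.2 - 1) / 2)
  left_inv nm := by ext <;> simp <;> omega
  right_inv p := by
    have h := p.2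
    simp only [evenSet, Set.mem_compl_iff, Set.mem_setOf_eq] at h
    ext <;> simp <;> omega


/-- For `0 < q < 1`, the theta series `F(q) = ∑_{(x,y) ∈ ℤ²} q^{x² − x·y + y²}` is
summable and equals `θ₃(q)θ₃(q³) + θ₂(q)θ₂(q³)`, i.e.
`(∑_{n} q^{n²})(∑_{n} q^{3n²}) + (∑_{n} q^{(2n+1)²/4})(∑_{n} q^{3(2n+1)²/4})`,
each of the four series on the right being absolutely convergent. Powers are real
powers of `q`. -/
theorem theta_series_F_eq_theta3_theta3_add_theta2_theta2
    (q : ℝ) (hq0 : 0 < q) (hq1 : q < 1) :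
    Summable (fun p : ℤ × ℤ => q ^ ((p.1 ^ 2 - p.1 * p.2 + p.2 ^ 2 : ℤ) : ℝ)) ∧
    Summable (fun n : ℤ => q ^ ((n ^ 2 : ℤ) : ℝ)) ∧
    Summable (fun n : ℤ => q ^ ((3 * n ^ 2 : ℤ) : ℝ)) ∧
    Summable (fun n : ℤ => q ^ ((((2 * n + 1) ^ 2 : ℤ) : ℝ) / 4)) ∧
    Summable (fun n : ℤ => q ^ (((3 * (2 * n + 1) ^ 2 : ℤ) : ℝ) / 4)) ∧
    (∑' p : ℤ × ℤ, q ^ ((p.1 ^ 2 - p.1 * p.2 + p.2 ^ 2 : ℤ) : ℝ)) =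
      (∑' n : ℤ, q ^ ((n ^ 2 : ℤ) : ℝ)) * (∑' n : ℤ, q ^ ((3 * n ^ 2 : ℤ) : ℝ)) +
      (∑' n : ℤ, q ^ ((((2 * n + 1) ^ 2 : ℤ) : ℝ) / 4)) *
        (∑' n : ℤ, q ^ (((3 * (2 * n + 1) ^ 2 : ℤ) : ℝ) / 4)) := by
  set f : ℤ × ℤ → ℝ := fun p => q ^ ((p.1 ^ 2 - p.1 * p.2 + p.2 ^ 2 : ℤ) : ℝ) with hf
  set g1 : ℤ → ℝ := fun n => q ^ ((n ^ 2 : ℤ) : ℝ) with hg1def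
  set g2 : ℤ → ℝ := fun n => q ^ ((3 * n ^ 2 : ℤ) : ℝ) with hg2def
  set g3 : ℤ → ℝ := fun n => q ^ ((((2 * n + 1) ^ 2 : ℤ) : ℝ) / 4) with hg3def
  set g4 : ℤ → ℝ := fun n => q ^ (((3 * (2 * n + 1) ^ 2 : ℤ) : ℝ) / 4) with hg4def
  -- summability of the four single series
  have hg1 : Summable g1 := summable_aux hq0 hq1 (fun n => by
    push_cast; nlinarith [sq_abs ((n : ℝ)), sq_nonneg (|(n : ℝ)| - 1), abs_nonneg ((n : ℝ))])
  have hg2 : Summable g2 := summable_aux hq0 hq1 (fun n => by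
    push_cast; nlinarith [sq_abs ((n : ℝ)), sq_nonneg (|(n : ℝ)| - 1), abs_nonneg ((n : ℝ))])
  have hg3 : Summable g3 := summable_aux hq0 hq1 (fun n => by
    push_cast
    rcases abs_cases ((n : ℝ)) with ⟨h, _⟩ | ⟨h, _⟩ <;> rw [h] <;>
      nlinarith [sq_nonneg ((n : ℝ) + 1), sq_nonneg ((n : ℝ))])
  have hg4 : Summable g4 := summable_aux hq0 hq1 (fun n => by
    push_cast
    rcases abs_cases ((n : ℝ)) with ⟨h, _⟩ | ⟨h, _⟩ <;> rw [h] <;>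
      nlinarith [sq_nonneg ((n : ℝ) + 1), sq_nonneg ((n : ℝ))])
  -- product summability
  have habs : ∀ (g : ℤ → ℝ), Summable g → (∀ n, 0 ≤ g n) → Summable fun n => ‖g n‖ := by
    intro g hg hpos
    simpa only [Real.norm_of_nonneg (hpos _)] using hg
  have hpos : ∀ (E : ℝ), 0 ≤ q ^ E := fun E => (Real.rpow_pos_of_pos hq0 E).le
  have h12 : Summable fun x : ℤ × ℤ => g1 x.1 * g2 x.2 :=
    summable_mul_of_summable_norm (habs g1 hg1 fun n => hpos _) (habs g2 hg2 fun n => hpos _)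
  have h34 : Summable fun x : ℤ × ℤ => g3 x.1 * g4 x.2 :=
    summable_mul_of_summable_norm (habs g3 hg3 fun n => hpos _) (habs g4 hg4 fun n => hpos _)
  have hs12 : HasSum (fun x : ℤ × ℤ => g1 x.1 * g2 x.2) ((∑' n, g1 n) * ∑' n, g2 n) :=
    hg1.hasSum.mul hg2.hasSum h12
  have hs34 : HasSum (fun x : ℤ × ℤ => g3 x.1 * g4 x.2) ((∑' n, g3 n) * ∑' n, g4 n) :=
    hg3.hasSum.mul hg4.hasSum h34
  -- transport through the equivalences
  have key1 : (fun x : ℤ × ℤ => g1 x.1 * g2 x.2) = (f ∘ (↑) : evenSet → ℝ) ∘ evenEquiv := by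
    funext nm
    simp only [Function.comp_apply, evenEquiv, Equiv.coe_fn_mk, hf, hg1def, hg2def]
    rw [← Real.rpow_add hq0]
    congr 1
    push_cast
    ring
  have key2 : (fun x : ℤ × ℤ => g3 x.1 * g4 x.2)
      = (f ∘ (↑) : (evenSetᶜ : Set (ℤ × ℤ)) → ℝ) ∘ oddEquiv := by
    funext nm
    simp only [Function.comp_apply, oddEquiv, Equiv.coe_fn_mk, hf, hg3def, hg4def]
    rw [← Real.rpow_add hq0]
    congr 1
    push_cast
    ring
  have heven : HasSum (f ∘ (↑) : evenSet → ℝ) ((∑' n, g1 n) * ∑' n, g2 n) :=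
    evenEquiv.hasSum_iff.mp (key1 ▸ hs12)
  have hodd : HasSum (f ∘ (↑) : (evenSetᶜ : Set (ℤ × ℤ)) → ℝ)
      ((∑' n, g3 n) * ∑' n, g4 n) :=
    oddEquiv.hasSum_iff.mp (key2 ▸ hs34)
  have hF : HasSum f (((∑' n, g1 n) * ∑' n, g2 n) + ((∑' n, g3 n) * ∑' n, g4 n)) :=
    heven.add_compl hodd
  exact ⟨hF.summable, hg1, hg2, hg3, hg4, hF.tsum_eq⟩
end
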